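/- arXiv:2411.01655 — 6 statements merged into one kernel-verified Lean document; each statement's English description precedes it below -/
import Mathlib

section
/- Let n ≥ 1 and let Ω ⊆ EuclideanSpace ℝ (Fin n) be an open set such that Metric.ball 0 r ⊆ Ω ⊆ Metric.ball 0 R for some 0 < r ≤ R, and such that Ω is star-shaped with respect to every point of Metric.ball 0 ρ for some ρ > 0. Then for all x, y in the frontier of Ω, writing α := Real.arccos (⟪x, y⟫ / (‖x‖ * ‖y‖)) ∈ [0, π] for the angle between x and y, one has r * (2/π) * α ≤ ‖x - y‖ and ‖x - y‖ ≤ (R^2 / ρ) * α. -/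
/-!
The lower bound is the law of cosines, `‖x - y‖² ≥ 2 ‖x‖ ‖y‖ (1 - cos α)`, together with
Jordan's inequality `cos α ≤ 1 - 2 α² / π²` and `‖x‖, ‖y‖ ≥ r`.

For the upper bound, star-shapedness with respect to `ball 0 ρ` puts the open cone from a point
of `closure Ω` over that ball inside `interior Ω`, so beyond a boundary point `y` the ray from
another boundary point `x` through `y` stays outside `ball 0 ρ`. If the angle of the triangle
`0 x y` at `y` is not acute, the foot of the perpendicular from `0` to the line `x y` lies on that
ray, whence `ρ ‖x - y‖ ≤ ‖x‖ ‖y‖ sin α ≤ R² α`. If the angles at `x` and `y` are both acute, then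
`‖x - y‖² = ⟪x, x - y⟫ + ⟪y, y - x⟫ ≤ R (‖x‖ + ‖y‖) (1 - cos α) ≤ R² α²`, and `R ≤ R² / ρ`.
-/

open scoped RealInnerProductSpace
open InnerProductGeometry Real Metric

section InnerProduct

variable {V : Type*} [NormedAddCommGroup V] [InnerProductSpace ℝ V]

theorem mul_two_div_pi_mul_angle_le_norm_sub {r : ℝ} {x y : V} (hx : r ≤ ‖x‖) (hy : r ≤ ‖y‖) :
    r * (2 / π) * angle x y ≤ ‖x - y‖ := by
  have hα := angle_nonneg x y
  rcases le_or_gt r 0 with hr | hr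
  · have : 0 ≤ 2 / π * angle x y := by positivity
    nlinarith [norm_nonneg (x - y)]
  have hjordan : cos (angle x y) ≤ 1 - 2 / π ^ 2 * angle x y ^ 2 :=
    cos_le_one_sub_mul_cos_sq (abs_le.2 ⟨by linarith [pi_pos], angle_le_pi x y⟩)
  have hr2 : r ^ 2 ≤ ‖x‖ * ‖y‖ := by nlinarith
  have hsq : (r * (2 / π) * angle x y) ^ 2 ≤ ‖x - y‖ ^ 2 := calc
    (r * (2 / π) * angle x y) ^ 2 = 2 * r ^ 2 * (2 / π ^ 2 * angle x y ^ 2) := by ring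
    _ ≤ 2 * (‖x‖ * ‖y‖) * (1 - cos (angle x y)) := by gcongr; linarith
    _ ≤ ‖x - y‖ ^ 2 := by
      rw [norm_sub_sq_real, ← cos_angle_mul_norm_mul_norm]
      nlinarith [sq_nonneg (‖x‖ - ‖y‖)]
  exact (pow_le_pow_iff_left₀ (by positivity) (norm_nonneg _) two_ne_zero).1 hsq

theorem norm_sub_le_mul_angle_of_inner_nonneg {R : ℝ} {x y : V} (hx₀ : x ≠ 0) (hy₀ : y ≠ 0)
    (hxR : ‖x‖ ≤ R) (hyR : ‖y‖ ≤ R) (hx : 0 ≤ ⟪x, x - y⟫) (hy : 0 ≤ ⟪y, y - x⟫) :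
    ‖x - y‖ ≤ R * angle x y := by
  have ha := norm_pos_iff.2 hx₀
  have hb := norm_pos_iff.2 hy₀
  set c := cos (angle x y)
  have hxx : ⟪x, x - y⟫ = ‖x‖ * (‖x‖ - ‖y‖ * c) := by
    rw [inner_sub_right, real_inner_self_eq_norm_sq, ← cos_angle_mul_norm_mul_norm]; ring
  have hyy : ⟪y, y - x⟫ = ‖y‖ * (‖y‖ - ‖x‖ * c) := by
    rw [inner_sub_right, real_inner_self_eq_norm_sq, real_inner_comm,
      ← cos_angle_mul_norm_mul_norm]; ring
  have hsum : ‖x - y‖ ^ 2 = ⟪x, x - y⟫ + ⟪y, y - x⟫ := by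
    rw [norm_sub_sq_real, inner_sub_right, inner_sub_right, real_inner_self_eq_norm_sq,
      real_inner_self_eq_norm_sq, real_inner_comm]; ring
  have hux : 0 ≤ ‖x‖ - ‖y‖ * c := nonneg_of_mul_nonneg_right (hxx ▸ hx) ha
  have huy : 0 ≤ ‖y‖ - ‖x‖ * c := nonneg_of_mul_nonneg_right (hyy ▸ hy) hb
  have hc : 1 - angle x y ^ 2 / 2 ≤ c := one_sub_sq_div_two_le_cos
  have hc₁ : c ≤ 1 := cos_le_one _
  have hR : 0 ≤ R := ha.le.trans hxR
  have hsq : ‖x - y‖ ^ 2 ≤ (R * angle x y) ^ 2 := calc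
    ‖x - y‖ ^ 2 ≤ R * (‖x‖ - ‖y‖ * c) + R * (‖y‖ - ‖x‖ * c) := by
      rw [hsum, hxx, hyy]; gcongr
    _ = R * (‖x‖ + ‖y‖) * (1 - c) := by ring
    _ ≤ R * (2 * R) * (angle x y ^ 2 / 2) := by gcongr <;> linarith
    _ = (R * angle x y) ^ 2 := by ring
  exact (pow_le_pow_iff_left₀ (norm_nonneg _) (mul_nonneg hR (angle_nonneg x y))
    two_ne_zero).1 hsq

theorem mul_norm_sub_le_mul_sin_angle {ρ : ℝ} {x y : V}
    (hray : ∀ t : ℝ, 1 ≤ t → ρ ≤ ‖x + t • (y - x)‖) (hy : ⟪y, y - x⟫ ≤ 0) :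
    ρ * ‖x - y‖ ≤ ‖x‖ * ‖y‖ * sin (angle x y) := by
  have hS : 0 ≤ ‖x‖ * ‖y‖ * sin (angle x y) := by have := sin_angle_nonneg x y; positivity
  rcases le_or_gt ρ 0 with hρ | hρ
  · exact (mul_nonpos_of_nonpos_of_nonneg hρ (norm_nonneg _)).trans hS
  rcases eq_or_ne x y with rfl | hxy
  · simpa using hS
  have hne : ‖x - y‖ ≠ 0 := norm_ne_zero_iff.2 (sub_ne_zero.2 hxy)
  have hd : 0 < ‖x - y‖ ^ 2 := by positivity
  set t := ⟪x, x - y⟫ / ‖x - y‖ ^ 2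
  have hsum : ‖x - y‖ ^ 2 = ⟪x, x - y⟫ - ⟪y, x - y⟫ := by
    rw [← real_inner_self_eq_norm_sq, inner_sub_left]
  have ht : 1 ≤ t := by
    have : ⟪y, x - y⟫ = -⟪y, y - x⟫ := by rw [← inner_neg_right, neg_sub]
    rw [le_div_iff₀ hd, one_mul, hsum]
    linarith
  -- `t` is the parameter of the foot of the perpendicular from `0` to the line through `x` and `y`.
  have hfoot : ‖x + t • (y - x)‖ ^ 2 * ‖x - y‖ ^ 2 = ‖x‖ ^ 2 * ‖y‖ ^ 2 - ⟪x, y⟫ ^ 2 := by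
    have hq : ⟪x, y - x⟫ = -⟪x, x - y⟫ := by rw [← inner_neg_right, neg_sub]
    have hp : ⟪x, x - y⟫ = ‖x‖ ^ 2 - ⟪x, y⟫ := by
      rw [inner_sub_right, real_inner_self_eq_norm_sq]
    rw [norm_add_sq_real, inner_smul_right, norm_smul, mul_pow, norm_sub_rev y x, norm_eq_abs,
      sq_abs, hq]
    have hD := norm_sub_sq_real x y
    simp only [t]
    field_simp
    rw [hp]
    linear_combination (‖x‖ ^ 2) * hD
  have hsin : (‖x‖ * ‖y‖ * sin (angle x y)) ^ 2 = ‖x‖ ^ 2 * ‖y‖ ^ 2 - ⟪x, y⟫ ^ 2 := by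
    rw [mul_comm, sin_angle_mul_norm_mul_norm,
      sq_sqrt (sub_nonneg.2 (real_inner_mul_inner_self_le x y))]
    simp only [real_inner_self_eq_norm_sq]; ring
  have hsq : (ρ * ‖x - y‖) ^ 2 ≤ (‖x‖ * ‖y‖ * sin (angle x y)) ^ 2 := by
    rw [hsin, ← hfoot, mul_pow]
    gcongr
    exact hray t ht
  exact (pow_le_pow_iff_left₀ (by positivity) hS two_ne_zero).1 hsq

theorem norm_sub_le_sq_div_mul_angle {R ρ : ℝ} {x y : V} (hρ : 0 < ρ)
    (hxR : ‖x‖ ≤ R) (hyR : ‖y‖ ≤ R)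
    (hxy : ∀ t : ℝ, 1 ≤ t → ρ ≤ ‖x + t • (y - x)‖)
    (hyx : ∀ t : ℝ, 1 ≤ t → ρ ≤ ‖y + t • (x - y)‖) :
    ‖x - y‖ ≤ R ^ 2 / ρ * angle x y := by
  have hρx : ρ ≤ ‖x‖ := by simpa using hyx 1 le_rfl
  have hρy : ρ ≤ ‖y‖ := by simpa using hxy 1 le_rfl
  have hx₀ : x ≠ 0 := norm_pos_iff.1 (hρ.trans_le hρx)
  have hy₀ : y ≠ 0 := norm_pos_iff.1 (hρ.trans_le hρy)
  have harea : ‖x‖ * ‖y‖ * sin (angle x y) ≤ R ^ 2 * angle x y := by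
    have hR : 0 ≤ R := (norm_nonneg x).trans hxR
    rw [sq]
    exact mul_le_mul (mul_le_mul hxR hyR (norm_nonneg y) hR) (sin_le (angle_nonneg x y))
      (sin_angle_nonneg x y) (mul_nonneg hR hR)
  rw [div_mul_eq_mul_div, le_div_iff₀ hρ, mul_comm]
  rcases le_total ⟪y, y - x⟫ 0 with hy | hy
  · exact (mul_norm_sub_le_mul_sin_angle hxy hy).trans harea
  rcases le_total ⟪x, x - y⟫ 0 with hx | hx
  · have := mul_norm_sub_le_mul_sin_angle hyx hx
    rw [norm_sub_rev, angle_comm, mul_comm ‖y‖] at this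
    exact this.trans harea
  calc ρ * ‖x - y‖ ≤ R * (R * angle x y) :=
        mul_le_mul (hρx.trans hxR) (norm_sub_le_mul_angle_of_inner_nonneg hx₀ hy₀ hxR hyR hx hy)
          (norm_nonneg _) ((norm_nonneg x).trans hxR)
    _ = R ^ 2 * angle x y := by ring

end InnerProduct

section StarConvex

variable {E : Type*} [NormedAddCommGroup E] [NormedSpace ℝ E]

theorem ball_subset_of_forall_starConvex {Ω : Set E} {c x : E} {ρ s : ℝ}
    (hstar : ∀ z ∈ ball c ρ, StarConvex ℝ z Ω) (hx : x ∈ Ω) (hs₀ : 0 ≤ s) (hs₁ : s ≤ 1) :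
    ball ((1 - s) • x + s • c) (s * ρ) ⊆ Ω := by
  intro w hw
  rcases hs₀.eq_or_lt with rfl | hs₀
  · simp at hw
  set z := c + s⁻¹ • (w - ((1 - s) • x + s • c))
  have hz : z ∈ ball c ρ := by
    rw [mem_ball, dist_eq_norm, add_sub_cancel_left, norm_smul, norm_inv, norm_of_nonneg hs₀.le,
      inv_mul_lt_iff₀ hs₀, ← dist_eq_norm]
    exact hw
  convert hstar z hz hx hs₀.le (sub_nonneg.2 hs₁) (add_sub_cancel s 1) using 1
  simp only [z, smul_add, smul_smul, mul_inv_cancel₀ hs₀.ne', one_smul]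
  abel

theorem le_dist_of_forall_starConvex {Ω : Set E} {c x y : E} {ρ t : ℝ}
    (hstar : ∀ z ∈ ball c ρ, StarConvex ℝ z Ω) (hx : x ∈ closure Ω) (hy : y ∉ interior Ω)
    (ht : 1 ≤ t) : ρ ≤ dist (x + t • (y - x)) c := by
  by_contra! hlt
  set z := x + t • (y - x)
  have ht₀ : 0 < t := zero_lt_one.trans_le ht
  have hs₀ : 0 < t⁻¹ := inv_pos.2 ht₀
  have hs₁ : t⁻¹ ≤ 1 := inv_le_one_of_one_le₀ ht
  have hyz : y = (1 - t⁻¹) • x + t⁻¹ • z := by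
    simp only [z, smul_add, smul_smul, inv_mul_cancel₀ ht₀.ne', one_smul, sub_smul]
    abel
  obtain ⟨x', hx'Ω, hxx'⟩ := Metric.mem_closure_iff.1 hx (t⁻¹ * (ρ - dist z c))
    (mul_pos hs₀ (sub_pos.2 hlt))
  refine hy (mem_interior.2 ⟨_, ball_subset_of_forall_starConvex hstar hx'Ω hs₀.le hs₁,
    isOpen_ball, ?_⟩)
  rw [mem_ball, hyz]
  calc dist ((1 - t⁻¹) • x + t⁻¹ • z) ((1 - t⁻¹) • x' + t⁻¹ • c)
      ≤ dist ((1 - t⁻¹) • x) ((1 - t⁻¹) • x') + dist (t⁻¹ • z) (t⁻¹ • c) := dist_add_add_le _ _ _ _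
    _ = (1 - t⁻¹) * dist x x' + t⁻¹ * dist z c := by
      rw [dist_smul₀, dist_smul₀, norm_of_nonneg (sub_nonneg.2 hs₁), norm_of_nonneg hs₀.le]
    _ < t⁻¹ * ρ := by nlinarith [dist_nonneg (x := x) (y := x')]

end StarConvex

theorem stardomains_boundary_angle_estimate_general
    (n : ℕ) (Ω : Set (EuclideanSpace ℝ (Fin n)))
    (r R ρ : ℝ) (hρ : 0 < ρ)
    (hball : Metric.ball (0 : EuclideanSpace ℝ (Fin n)) r ⊆ Ω)
    (hΩR : Ω ⊆ Metric.ball (0 : EuclideanSpace ℝ (Fin n)) R)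
    (hstar : ∀ z ∈ Metric.ball (0 : EuclideanSpace ℝ (Fin n)) ρ, StarConvex ℝ z Ω)
    (x y : EuclideanSpace ℝ (Fin n)) (hx : x ∈ frontier Ω) (hy : y ∈ frontier Ω) :
    r * (2 / Real.pi) * Real.arccos (⟪x, y⟫ / (‖x‖ * ‖y‖)) ≤ ‖x - y‖ ∧
      ‖x - y‖ ≤ (R ^ 2 / ρ) * Real.arccos (⟪x, y⟫ / (‖x‖ * ‖y‖)) := by
  have hr {u} (hu : u ∈ frontier Ω) : r ≤ ‖u‖ :=
    not_lt.1 fun h ↦ hu.2 (interior_maximal hball isOpen_ball (mem_ball_zero_iff.2 h))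
  have hR {u} (hu : u ∈ frontier Ω) : ‖u‖ ≤ R :=
    mem_closedBall_zero_iff.1 (closure_ball_subset_closedBall (closure_mono hΩR hu.1))
  have hray {u v} (hu : u ∈ frontier Ω) (hv : v ∈ frontier Ω) (t : ℝ) (ht : 1 ≤ t) :
      ρ ≤ ‖u + t • (v - u)‖ := by
    simpa using le_dist_of_forall_starConvex hstar hu.1 hv.2 ht
  exact ⟨mul_two_div_pi_mul_angle_le_norm_sub (hr hx) (hr hy),
    norm_sub_le_sq_div_mul_angle hρ (hR hx) (hR hy) (hray hx hy) (hray hy hx)⟩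

/-- Lemma 2 (`lemma:stardomainsarestargraphs`): for a domain `Ω` with
`ball 0 r ⊆ Ω ⊆ ball 0 R` that is star-shaped with respect to the ball `ball 0 ρ`,
any two boundary points `x, y` with angle `α` satisfy
`r * (2/π) * α ≤ ‖x - y‖ ≤ (R²/ρ) * α`. -/
theorem stardomains_boundary_angle_estimate
    (n : ℕ) (hn : 1 ≤ n) (Ω : Set (EuclideanSpace ℝ (Fin n))) (hΩ : IsOpen Ω)
    (r R ρ : ℝ) (hr : 0 < r) (hrR : r ≤ R) (hρ : 0 < ρ)
    (hball : Metric.ball (0 : EuclideanSpace ℝ (Fin n)) r ⊆ Ω)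
    (hΩR : Ω ⊆ Metric.ball (0 : EuclideanSpace ℝ (Fin n)) R)
    (hstar : ∀ z ∈ Metric.ball (0 : EuclideanSpace ℝ (Fin n)) ρ, StarConvex ℝ z Ω)
    (x y : EuclideanSpace ℝ (Fin n)) (hx : x ∈ frontier Ω) (hy : y ∈ frontier Ω) :
    r * (2 / Real.pi) * Real.arccos (⟪x, y⟫ / (‖x‖ * ‖y‖)) ≤ ‖x - y‖ ∧
      ‖x - y‖ ≤ (R ^ 2 / ρ) * Real.arccos (⟪x, y⟫ / (‖x‖ * ‖y‖)) :=
  stardomains_boundary_angle_estimate_general n Ω r R ρ hρ hball hΩR hstar x y hx hy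
end

section
/- Let n ≥ 1 and let Ω ⊆ EuclideanSpace ℝ (Fin n) be contained in the ball Metric.ball 0 R and star-shaped with respect to every point of Metric.ball 0 ρ, where 0 < ρ ≤ R. Then for all x, y in the frontier of Ω, writing α := Real.arccos (⟪x, y⟫ / (‖x‖ * ‖y‖)) for the angle between x and y, one has |‖x‖ - ‖y‖| ≤ (R / ρ) * Real.sqrt (R^2 - ρ^2) * α. -/
open scoped RealInnerProductSpace

/-!
For `x ∈ closure Ω` and `t ∈ [0, 1]`, star-shapedness puts the ball of radius `(1 - t) ρ`
about `t • x` inside `interior Ω`, so a boundary point `y` keeps distance at least `(1 - t) ρ`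
from every `t • x`: it lies outside the cone spanned by `x` and the ball `B(0, ρ)`.
Write `r = ‖x‖ ≥ ‖y‖ = s` and `α` for the angle between `x` and `y`. If `r cos α ≤ ρ`, then `α`
exceeds the tangent angle `arccos (ρ / r) ≥ √(r² - ρ²) / r`, and `r - s ≤ r - ρ ≤ (r² - ρ²) / ρ`
suffices. Otherwise minimising `‖y - t • x‖² - (1 - t)² ρ²` over `t` shows that `y` lies beyond
the tangent line from `x` to the ball, `ρ (r - s cos α) ≤ s sin α √(r² - ρ²)`, and
`sin α ≤ α` concludes.
-/

open Set Metric Real InnerProductGeometry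

section StarShaped

variable {E : Type*} [NormedAddCommGroup E] [NormedSpace ℝ E] {Ω : Set E} {ρ t : ℝ}

theorem mem_of_norm_sub_smul_lt (hstar : ∀ z ∈ ball (0 : E) ρ, StarConvex ℝ z Ω) {u p : E}
    (hu : u ∈ Ω) (ht₀ : 0 ≤ t) (ht₁ : t ≤ 1) (hp : ‖p - t • u‖ < (1 - t) * ρ) : p ∈ Ω := by
  have h1t : 0 < 1 - t := by
    rcases (sub_nonneg.2 ht₁).lt_or_eq with h | h
    · exact h
    · rw [← h, zero_mul] at hp
      exact absurd hp (not_lt.2 (norm_nonneg _))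
  set z := (1 - t)⁻¹ • (p - t • u)
  have hz : z ∈ ball (0 : E) ρ := by
    rwa [mem_ball_zero_iff, norm_smul, norm_inv, Real.norm_of_nonneg h1t.le, inv_mul_lt_iff₀ h1t]
  have hp_eq : (1 - t) • z + t • u = p := by simp [z, smul_inv_smul₀ h1t.ne']
  simpa [hp_eq] using hstar z hz hu h1t.le ht₀ (by ring)

theorem ball_smul_subset_interior (hstar : ∀ z ∈ ball (0 : E) ρ, StarConvex ℝ z Ω) {x : E}
    (hx : x ∈ closure Ω) (ht₀ : 0 ≤ t) (ht₁ : t ≤ 1) :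
    ball (t • x) ((1 - t) * ρ) ⊆ interior Ω := by
  refine interior_maximal (fun p hp => ?_) isOpen_ball
  rw [mem_ball, dist_eq_norm] at hp
  have hopen : IsOpen {v : E | ‖p - t • v‖ < (1 - t) * ρ} := isOpen_lt (by fun_prop) continuous_const
  obtain ⟨v, hv, hvΩ⟩ := mem_closure_iff.1 hx _ hopen hp
  exact mem_of_norm_sub_smul_lt hstar hvΩ ht₀ ht₁ hv

theorem mul_le_norm_sub_smul (hstar : ∀ z ∈ ball (0 : E) ρ, StarConvex ℝ z Ω) {x y : E}
    (hx : x ∈ closure Ω) (hy : y ∉ interior Ω) (ht₀ : 0 ≤ t) (ht₁ : t ≤ 1) :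
    (1 - t) * ρ ≤ ‖y - t • x‖ := by
  by_contra h
  exact hy (ball_smul_subset_interior hstar hx ht₀ ht₁ (by rwa [mem_ball, dist_eq_norm, ← not_le]))

end StarShaped

theorem sq_le_mul_of_forall_mem_Icc_nonneg {A B C : ℝ} (hA : 0 < A) (hB : 0 ≤ B) (hBA : B ≤ A)
    (h : ∀ t ∈ Icc (0 : ℝ) 1, 0 ≤ A * t ^ 2 - 2 * B * t + C) : B ^ 2 ≤ A * C := by
  have hmin := h (B / A) ⟨div_nonneg hB hA.le, div_le_one_of_le₀ hBA hA.le⟩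
  have hval : A * (A * (B / A) ^ 2 - 2 * B * (B / A) + C) = A * C - B ^ 2 := by
    field_simp
    ring
  nlinarith [mul_nonneg hA.le hmin]

theorem sqrt_one_sub_sq_le_of_cos_le {θ a : ℝ} (hθ₀ : 0 ≤ θ) (hθπ : θ ≤ π) (h : cos θ ≤ a) :
    √(1 - a ^ 2) ≤ θ :=
  calc √(1 - a ^ 2) = sin (arccos a) := (sin_arccos a).symm
    _ ≤ arccos a := sin_le (arccos_nonneg a)
    _ ≤ arccos (cos θ) := arccos_le_arccos h
    _ = θ := arccos_cos hθ₀ hθπ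

section Planar

variable {ρ r s θ : ℝ}

theorem sub_le_of_mul_cos_le (hρ : 0 < ρ) (hρs : ρ ≤ s) (hsr : s ≤ r) (hθ₀ : 0 ≤ θ)
    (hθπ : θ ≤ π) (hcos : r * cos θ ≤ ρ) :
    r - s ≤ r / ρ * √(r ^ 2 - ρ ^ 2) * θ := by
  have hr : 0 < r := by linarith
  have hsq : 0 ≤ r ^ 2 - ρ ^ 2 := by nlinarith
  have htangent : √(r ^ 2 - ρ ^ 2) ≤ r * θ := by
    have hscale : √(r ^ 2 - ρ ^ 2) = r * √(1 - (ρ / r) ^ 2) := by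
      rw [← sqrt_sq hr.le, ← sqrt_mul (sq_nonneg r), sqrt_sq hr.le]
      congr 1
      field_simp
    rw [hscale]
    gcongr
    exact sqrt_one_sub_sq_le_of_cos_le hθ₀ hθπ (by rwa [le_div_iff₀ hr, mul_comm])
  calc r - s ≤ (r ^ 2 - ρ ^ 2) / ρ := by rw [le_div_iff₀ hρ]; nlinarith
    _ = √(r ^ 2 - ρ ^ 2) * √(r ^ 2 - ρ ^ 2) / ρ := by rw [mul_self_sqrt hsq]
    _ ≤ r * θ * √(r ^ 2 - ρ ^ 2) / ρ := by gcongr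
    _ = r / ρ * √(r ^ 2 - ρ ^ 2) * θ := by ring

theorem sub_le_of_lt_mul_cos (hρ : 0 < ρ) (hρs : ρ ≤ s) (hsr : s ≤ r) (hθ₀ : 0 ≤ θ)
    (hθπ : θ ≤ π) (hcos : ρ < r * cos θ)
    (h : ∀ t ∈ Icc (0 : ℝ) 1, ((1 - t) * ρ) ^ 2 ≤ s ^ 2 - 2 * t * (r * s * cos θ) + t ^ 2 * r ^ 2) :
    r - s ≤ r / ρ * √(r ^ 2 - ρ ^ 2) * θ := by
  have hs : 0 < s := hρ.trans_le hρs
  have hcos_le : cos θ ≤ 1 := cos_le_one θ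
  have hsin : 0 ≤ sin θ := sin_nonneg_of_nonneg_of_le_pi hθ₀ hθπ
  have hscos : s * cos θ ≤ r := by nlinarith
  have hρr : ρ < r := hcos.trans_le (by nlinarith)
  have hsq : 0 ≤ r ^ 2 - ρ ^ 2 := by nlinarith
  have hdisc : (r * s * cos θ - ρ ^ 2) ^ 2 ≤ (r ^ 2 - ρ ^ 2) * (s ^ 2 - ρ ^ 2) := by
    refine sq_le_mul_of_forall_mem_Icc_nonneg (by nlinarith) (by nlinarith) (by nlinarith)
      fun t ht => ?_
    nlinarith [h t ht]
  have hline : ρ * (r - s * cos θ) ≤ s * sin θ * √(r ^ 2 - ρ ^ 2) := by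
    have hsq_line : (ρ * (r - s * cos θ)) ^ 2 ≤ (s * sin θ * √(r ^ 2 - ρ ^ 2)) ^ 2 := by
      rw [mul_pow, mul_pow, mul_pow, sq_sqrt hsq, sin_sq]
      linear_combination hdisc
    exact (pow_le_pow_iff_left₀ (mul_nonneg hρ.le (by linarith)) (by positivity)
      two_ne_zero).1 hsq_line
  have hr : 0 ≤ r := by linarith
  have hsin_le : sin θ ≤ θ := sin_le hθ₀
  calc r - s ≤ r - s * cos θ := by nlinarith
    _ ≤ s * sin θ * √(r ^ 2 - ρ ^ 2) / ρ := by rw [le_div_iff₀ hρ]; linarith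
    _ ≤ r * θ * √(r ^ 2 - ρ ^ 2) / ρ := by gcongr
    _ = r / ρ * √(r ^ 2 - ρ ^ 2) * θ := by ring

theorem sub_le_of_forall_mem_Icc (hρ : 0 < ρ) (hρs : ρ ≤ s) (hsr : s ≤ r) (hθ₀ : 0 ≤ θ)
    (hθπ : θ ≤ π)
    (h : ∀ t ∈ Icc (0 : ℝ) 1, ((1 - t) * ρ) ^ 2 ≤ s ^ 2 - 2 * t * (r * s * cos θ) + t ^ 2 * r ^ 2) :
    r - s ≤ r / ρ * √(r ^ 2 - ρ ^ 2) * θ := by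
  rcases le_or_gt (r * cos θ) ρ with hcos | hcos
  · exact sub_le_of_mul_cos_le hρ hρs hsr hθ₀ hθπ hcos
  · exact sub_le_of_lt_mul_cos hρ hρs hsr hθ₀ hθπ hcos h

end Planar

section InnerProduct

variable {F : Type*} [NormedAddCommGroup F] [InnerProductSpace ℝ F] {x y : F} {ρ : ℝ}

theorem norm_sub_norm_le_of_forall_mem_Icc (hρ : 0 < ρ) (hyx : ‖y‖ ≤ ‖x‖)
    (h : ∀ t ∈ Icc (0 : ℝ) 1, (1 - t) * ρ ≤ ‖y - t • x‖) :
    ‖x‖ - ‖y‖ ≤ ‖x‖ / ρ * √(‖x‖ ^ 2 - ρ ^ 2) * angle x y := by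
  refine sub_le_of_forall_mem_Icc hρ (by simpa using h 0 ⟨le_rfl, zero_le_one⟩) hyx
    (angle_nonneg x y) (angle_le_pi x y) fun t ht => ?_
  have hnorm : ‖y - t • x‖ ^ 2
      = ‖y‖ ^ 2 - 2 * t * (‖x‖ * ‖y‖ * cos (angle x y)) + t ^ 2 * ‖x‖ ^ 2 := by
    rw [norm_sub_sq_real, real_inner_smul_right, real_inner_comm, ← cos_angle_mul_norm_mul_norm,
      norm_smul, mul_pow, Real.norm_eq_abs, sq_abs]
    ring
  rw [← hnorm]
  exact pow_le_pow_left₀ (mul_nonneg (sub_nonneg.2 ht.2) hρ.le) (h t ht) 2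

theorem norm_sub_norm_le_of_mem_closure_of_notMem_interior {Ω : Set F} {R : ℝ} (hρ : 0 < ρ)
    (hΩR : Ω ⊆ ball (0 : F) R) (hstar : ∀ z ∈ ball (0 : F) ρ, StarConvex ℝ z Ω)
    (hx : x ∈ closure Ω) (hy : y ∉ interior Ω) :
    ‖x‖ - ‖y‖ ≤ R / ρ * √(R ^ 2 - ρ ^ 2) * angle x y := by
  have hxR : ‖x‖ ≤ R :=
    mem_closedBall_zero_iff.1 (closure_ball_subset_closedBall (closure_mono hΩR hx))
  have hR : 0 ≤ R := (norm_nonneg x).trans hxR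
  have hα : 0 ≤ angle x y := angle_nonneg x y
  rcases le_or_gt ‖y‖ ‖x‖ with hyx | hxy
  · calc ‖x‖ - ‖y‖ ≤ ‖x‖ / ρ * √(‖x‖ ^ 2 - ρ ^ 2) * angle x y :=
          norm_sub_norm_le_of_forall_mem_Icc hρ hyx fun t ht =>
            mul_le_norm_sub_smul hstar hx hy ht.1 ht.2
      _ ≤ R / ρ * √(R ^ 2 - ρ ^ 2) * angle x y := by gcongr
  · have : 0 ≤ R / ρ * √(R ^ 2 - ρ ^ 2) * angle x y := by positivity
    linarith

end InnerProduct

theorem magnitude_function_lipschitz_general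
    (n : ℕ) (Ω : Set (EuclideanSpace ℝ (Fin n)))
    (R ρ : ℝ) (hρ : 0 < ρ)
    (hΩR : Ω ⊆ Metric.ball (0 : EuclideanSpace ℝ (Fin n)) R)
    (hstar : ∀ z ∈ Metric.ball (0 : EuclideanSpace ℝ (Fin n)) ρ, StarConvex ℝ z Ω)
    (x y : EuclideanSpace ℝ (Fin n)) (hx : x ∈ frontier Ω) (hy : y ∈ frontier Ω) :
    |‖x‖ - ‖y‖| ≤ (R / ρ) * Real.sqrt (R ^ 2 - ρ ^ 2) *
      Real.arccos (⟪x, y⟫ / (‖x‖ * ‖y‖)) := by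
  change _ ≤ _ * angle x y
  rw [abs_sub_le_iff]
  refine ⟨norm_sub_norm_le_of_mem_closure_of_notMem_interior hρ hΩR hstar hx.1 hy.2, ?_⟩
  rw [angle_comm]
  exact norm_sub_norm_le_of_mem_closure_of_notMem_interior hρ hΩR hstar hy.1 hx.2

/-- Lemma 3 (`lemma:magnitudefunctionsarelipschitz`): for a set `Ω ⊆ ball 0 R` that is
star-shaped with respect to the ball `ball 0 ρ`, any two boundary points `x, y`
with angle `α` satisfy `|‖x‖ - ‖y‖| ≤ (R/ρ) * √(R² - ρ²) * α`. -/
theorem magnitude_function_lipschitz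
    (n : ℕ) (hn : 1 ≤ n) (Ω : Set (EuclideanSpace ℝ (Fin n)))
    (R ρ : ℝ) (hρ : 0 < ρ) (hρR : ρ ≤ R)
    (hΩR : Ω ⊆ Metric.ball (0 : EuclideanSpace ℝ (Fin n)) R)
    (hstar : ∀ z ∈ Metric.ball (0 : EuclideanSpace ℝ (Fin n)) ρ, StarConvex ℝ z Ω)
    (x y : EuclideanSpace ℝ (Fin n)) (hx : x ∈ frontier Ω) (hy : y ∈ frontier Ω) :
    |‖x‖ - ‖y‖| ≤ (R / ρ) * Real.sqrt (R ^ 2 - ρ ^ 2) *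
      Real.arccos (⟪x, y⟫ / (‖x‖ * ‖y‖)) :=
  magnitude_function_lipschitz_general n Ω R ρ hρ hΩR hstar x y hx hy
end

section
/- Let n ≥ 1 and let Ω ⊆ EuclideanSpace ℝ (Fin n) be a bounded open set that is star-shaped with respect to every point of Metric.ball 0 ρ (ρ > 0) and contained in Metric.ball 0 R. Define the expansion function s : E → ℝ by s(0) = 0 and, for x ≠ 0, s(x) = ‖x‖ * sSup {t : ℝ | 0 < t ∧ t • (‖x‖⁻¹ • x) ∈ Ω}. Then for all x, y ∈ E one has |s(x) - s(y)| ≤ (R^2 / ρ) * ‖x - y‖. -/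
/-!
Write `ι x = x / ‖x‖²`, so that `s x = sup {c > 0 | c • ι x ∈ Ω}` and
`‖ι x - ι y‖ = ‖x - y‖ / (‖x‖ ‖y‖)`. If `c • ι x ∈ Ω` and `b = c - (R² / ρ) ‖x - y‖ > 0`, then
`b • ι y = (1 - b / c) • z + (b / c) • (c • ι x)` with `‖z‖ = b c / ((R² / ρ) ‖x‖ ‖y‖) < ρ`,
because `b ≤ R ‖y‖` and `c < R ‖x‖`. Star-shapedness with respect to `z` puts `b • ι y` in `Ω`,
so `s y ≥ s x - (R² / ρ) ‖x - y‖`.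
-/

open Metric

section Radial

variable {E : Type*} [NormedAddCommGroup E] [NormedSpace ℝ E]

def radialSet (Ω : Set E) (u : E) : Set ℝ := {t | 0 < t ∧ t • u ∈ Ω}

noncomputable def expansionFunction (Ω : Set E) (x : E) : ℝ :=
  ‖x‖ * sSup (radialSet Ω (‖x‖⁻¹ • x))

variable {Ω : Set E} {ρ R : ℝ}

theorem le_of_ball_subset_ball [Nontrivial E] (hρ : 0 < ρ) (h : ball (0 : E) ρ ⊆ ball 0 R) :
    ρ ≤ R := by
  by_contra! hRρ
  have hR : 0 < R := nonempty_ball.1 ((nonempty_ball.2 hρ).mono h)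
  obtain ⟨v, hv⟩ := exists_norm_eq E hR.le
  have := h (mem_ball_zero_iff.2 (hv ▸ hRρ))
  rw [mem_ball_zero_iff, hv] at this
  exact lt_irrefl R this

theorem mem_of_starConvex_ball_of_norm_sub_smul_lt {θ : ℝ} {p q : E}
    (hstar : ∀ z ∈ ball (0 : E) ρ, StarConvex ℝ z Ω) (hp : p ∈ Ω) (hθ0 : 0 ≤ θ) (hθ1 : θ < 1)
    (hq : ‖q - θ • p‖ < (1 - θ) * ρ) : q ∈ Ω := by
  have hθ : 0 < 1 - θ := sub_pos.2 hθ1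
  set z := (1 - θ)⁻¹ • (q - θ • p)
  have hz : z ∈ ball 0 ρ := by
    rw [mem_ball_zero_iff, norm_smul, Real.norm_of_nonneg (inv_nonneg.2 hθ.le), inv_mul_lt_iff₀ hθ]
    exact hq
  have hcomb : (1 - θ) • z + θ • p = q := by
    simp only [z, smul_smul, mul_inv_cancel₀ hθ.ne', one_smul, sub_add_cancel]
  exact hcomb ▸ hstar z hz hp hθ.le hθ0 (sub_add_cancel 1 θ)

theorem lt_of_mem_radialSet {u : E} {t : ℝ} (hΩR : Ω ⊆ ball 0 R) (hu : ‖u‖ = 1)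
    (ht : t ∈ radialSet Ω u) : t < R := by
  have := hΩR ht.2
  rwa [mem_ball_zero_iff, norm_smul, hu, mul_one, Real.norm_of_nonneg ht.1.le] at this

@[simp]
theorem expansionFunction_zero : expansionFunction Ω 0 = 0 := by
  simp [expansionFunction]

theorem expansionFunction_nonneg (x : E) : 0 ≤ expansionFunction Ω x :=
  mul_nonneg (norm_nonneg x) (Real.sSup_nonneg fun _ ht => ht.1.le)

theorem expansionFunction_le (hΩR : Ω ⊆ ball 0 R) (hR : 0 ≤ R) (x : E) :
    expansionFunction Ω x ≤ R * ‖x‖ := by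
  rcases eq_or_ne x 0 with rfl | hx
  · simp
  rw [expansionFunction, mul_comm R]
  gcongr
  exact Real.sSup_le (fun t ht => (lt_of_mem_radialSet hΩR (norm_smul_inv_norm hx) ht).le) hR

end Radial

section Lipschitz

variable {E : Type*} [NormedAddCommGroup E] [InnerProductSpace ℝ E] {Ω : Set E} {ρ R : ℝ}

theorem mem_radialSet_of_mem_radialSet (hρ : 0 < ρ) (hρR : ρ ≤ R) (hΩR : Ω ⊆ ball 0 R)
    (hstar : ∀ z ∈ ball (0 : E) ρ, StarConvex ℝ z Ω) {x y : E} (hx : x ≠ 0) (hy : y ≠ 0)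
    (hxy : x ≠ y) {t : ℝ} (ht : t ∈ radialSet Ω (‖x‖⁻¹ • x))
    (hb : 0 < ‖x‖ * t - R ^ 2 / ρ * ‖x - y‖) :
    (‖x‖ * t - R ^ 2 / ρ * ‖x - y‖) / ‖y‖ ∈ radialSet Ω (‖y‖⁻¹ • y) := by
  set b := ‖x‖ * t - R ^ 2 / ρ * ‖x - y‖ with hb_def
  have hX : 0 < ‖x‖ := norm_pos_iff.2 hx
  have hY : 0 < ‖y‖ := norm_pos_iff.2 hy
  have hd : 0 < ‖x - y‖ := norm_pos_iff.2 (sub_ne_zero.2 hxy)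
  have ht0 : 0 < t := ht.1
  have htR : t < R := lt_of_mem_radialSet hΩR (norm_smul_inv_norm hx) ht
  have hR : 0 < R := hρ.trans_le hρR
  have hRC : R ≤ R ^ 2 / ρ := by rw [le_div_iff₀ hρ]; nlinarith
  have hbR : b ≤ R * ‖y‖ := by nlinarith [norm_sub_norm_le x y]
  have hbt : b * t < R ^ 2 * ‖y‖ := by nlinarith
  refine ⟨div_pos hb hY,
    mem_of_starConvex_ball_of_norm_sub_smul_lt (θ := b / (‖x‖ * t)) hstar ht.2 ?_ ?_ ?_⟩
  · positivity
  · have : 0 < R ^ 2 / ρ * ‖x - y‖ := by positivity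
    rw [div_lt_one (by positivity)]
    linarith
  have hvec : (b / ‖y‖) • ‖y‖⁻¹ • y - (b / (‖x‖ * t)) • t • ‖x‖⁻¹ • x
      = b • ((1 / ‖y‖) ^ 2 • y - (1 / ‖x‖) ^ 2 • x) := by
    match_scalars <;> field_simp
  rw [hvec, norm_smul, Real.norm_of_nonneg hb.le, ← dist_eq_norm, dist_div_norm_sq_smul hy hx,
    dist_eq_norm, norm_sub_rev y x]
  have hθρ : (1 - b / (‖x‖ * t)) * ρ = R ^ 2 * ‖x - y‖ / (‖x‖ * t) := by
    rw [hb_def]; field_simp; ring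
  rw [hθρ, one_pow, div_mul_eq_mul_div, one_mul, mul_div_assoc',
    div_lt_div_iff₀ (by positivity) (by positivity)]
  nlinarith [mul_pos hd hX]

theorem expansionFunction_le_add (hρ : 0 < ρ) (hρR : ρ ≤ R) (hΩR : Ω ⊆ ball 0 R)
    (hstar : ∀ z ∈ ball (0 : E) ρ, StarConvex ℝ z Ω) (x y : E) :
    expansionFunction Ω x ≤ expansionFunction Ω y + R ^ 2 / ρ * ‖x - y‖ := by
  have hR : 0 ≤ R := hρ.le.trans hρR
  rcases eq_or_ne x 0 with rfl | hx
  · rw [expansionFunction_zero]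
    exact add_nonneg (expansionFunction_nonneg y) (by positivity)
  rcases eq_or_ne y 0 with rfl | hy
  · have hRC : R ≤ R ^ 2 / ρ := by rw [le_div_iff₀ hρ]; nlinarith
    rw [expansionFunction_zero, zero_add, sub_zero]
    exact (expansionFunction_le hΩR hR x).trans (by gcongr)
  rcases eq_or_ne x y with rfl | hxy
  · simp
  have hX : 0 < ‖x‖ := norm_pos_iff.2 hx
  have hY : 0 < ‖y‖ := norm_pos_iff.2 hy
  have hTy : 0 ≤ sSup (radialSet Ω (‖y‖⁻¹ • y)) := Real.sSup_nonneg fun _ ht => ht.1.le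
  have hbdd : BddAbove (radialSet Ω (‖y‖⁻¹ • y)) :=
    ⟨R, fun t ht => (lt_of_mem_radialSet hΩR (norm_smul_inv_norm hy) ht).le⟩
  rw [expansionFunction, expansionFunction, ← le_div_iff₀' hX]
  refine Real.sSup_le (fun t ht => (le_div_iff₀' hX).2 ?_) (by positivity)
  by_cases hb : 0 < ‖x‖ * t - R ^ 2 / ρ * ‖x - y‖
  · have := le_csSup hbdd (mem_radialSet_of_mem_radialSet hρ hρR hΩR hstar hx hy hxy ht hb)
    rw [div_le_iff₀' hY] at this
    linarith
  · nlinarith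

theorem abs_expansionFunction_sub_le (hρ : 0 < ρ) (hΩR : Ω ⊆ ball 0 R)
    (hstar : ∀ z ∈ ball (0 : E) ρ, StarConvex ℝ z Ω) (x y : E) :
    |expansionFunction Ω x - expansionFunction Ω y| ≤ R ^ 2 / ρ * ‖x - y‖ := by
  rcases Ω.eq_empty_or_nonempty with rfl | hΩ
  · simp only [expansionFunction, radialSet, Set.mem_empty_iff_false, and_false,
      Set.ofPred_false, Real.sSup_empty, mul_zero, sub_zero, abs_zero]
    positivity
  rcases eq_or_ne x y with rfl | hxy
  · simp
  have : Nontrivial E := ⟨⟨x, y, hxy⟩⟩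
  have hρR : ρ ≤ R := le_of_ball_subset_ball hρ fun z hz => hΩR ((hstar z hz).mem hΩ)
  rw [abs_sub_le_iff]
  refine ⟨by linarith [expansionFunction_le_add hρ hρR hΩR hstar x y], ?_⟩
  rw [norm_sub_rev]
  linarith [expansionFunction_le_add hρ hρR hΩR hstar y x]

end Lipschitz

theorem expansion_function_lipschitz_general
    (n : ℕ) (Ω : Set (EuclideanSpace ℝ (Fin n)))
    (R ρ : ℝ) (hρ : 0 < ρ)
    (hΩR : Ω ⊆ Metric.ball (0 : EuclideanSpace ℝ (Fin n)) R)
    (hstar : ∀ z ∈ Metric.ball (0 : EuclideanSpace ℝ (Fin n)) ρ, StarConvex ℝ z Ω)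
    (s : EuclideanSpace ℝ (Fin n) → ℝ)
    (hs0 : s 0 = 0)
    (hs : ∀ x : EuclideanSpace ℝ (Fin n), x ≠ 0 →
      s x = ‖x‖ * sSup {t : ℝ | 0 < t ∧ t • (‖x‖⁻¹ • x) ∈ Ω}) :
    ∀ x y : EuclideanSpace ℝ (Fin n), |s x - s y| ≤ (R ^ 2 / ρ) * ‖x - y‖ := by
  obtain rfl : s = expansionFunction Ω := funext fun x => by
    rcases eq_or_ne x 0 with rfl | hx
    · rw [hs0, expansionFunction_zero]
    · exact hs x hx
  exact abs_expansionFunction_sub_le hρ hΩR hstar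

/-- Part of Theorem 5 (`theorem:lipschitz_of_scalar_functions`): the expansion function
(reciprocal radial function) of a bounded star domain, star-shaped with respect to
`ball 0 ρ` and contained in `ball 0 R`, is Lipschitz with constant `R²/ρ`. -/
theorem expansion_function_lipschitz
    (n : ℕ) (hn : 1 ≤ n) (Ω : Set (EuclideanSpace ℝ (Fin n)))
    (hΩ : IsOpen Ω) (hbdd : Bornology.IsBounded Ω)
    (R ρ : ℝ) (hρ : 0 < ρ)
    (hΩR : Ω ⊆ Metric.ball (0 : EuclideanSpace ℝ (Fin n)) R)
    (hstar : ∀ z ∈ Metric.ball (0 : EuclideanSpace ℝ (Fin n)) ρ, StarConvex ℝ z Ω)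
    (s : EuclideanSpace ℝ (Fin n) → ℝ)
    (hs0 : s 0 = 0)
    (hs : ∀ x : EuclideanSpace ℝ (Fin n), x ≠ 0 →
      s x = ‖x‖ * sSup {t : ℝ | 0 < t ∧ t • (‖x‖⁻¹ • x) ∈ Ω}) :
    ∀ x y : EuclideanSpace ℝ (Fin n), |s x - s y| ≤ (R ^ 2 / ρ) * ‖x - y‖ :=
  expansion_function_lipschitz_general n Ω R ρ hρ hΩR hstar s hs0 hs
end

section
/- Let n ≥ 1 and let Ω ⊆ EuclideanSpace ℝ (Fin n) be an open set (not necessarily bounded) that is star-shaped with respect to every point of Metric.ball 0 ρ, where ρ > 0. Then the gauge function of Ω is Lipschitz with constant 1/ρ: for all x, y ∈ E, |gauge Ω x - gauge Ω y| ≤ (1/ρ) * ‖x - y‖. -/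
open Set Metric Pointwise

lemma gauge_key (n : ℕ) (Ω : Set (EuclideanSpace ℝ (Fin n)))
    (hΩ : IsOpen Ω) (ρ : ℝ) (hρ : 0 < ρ)
    (hstar : ∀ z ∈ Metric.ball (0 : EuclideanSpace ℝ (Fin n)) ρ, StarConvex ℝ z Ω)
    (hne : Ω.Nonempty) (x y : EuclideanSpace ℝ (Fin n)) :
    gauge Ω x ≤ gauge Ω y + ‖x - y‖ / ρ := by
  have hball : Metric.ball (0 : EuclideanSpace ℝ (Fin n)) ρ ⊆ Ω := fun z hz =>
    (hstar z hz).mem hne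
  have h0 : (0 : EuclideanSpace ℝ (Fin n)) ∈ Ω := hball (by simpa using hρ)
  have habs : Absorbent ℝ Ω := absorbent_nhds_zero (hΩ.mem_nhds h0)
  refine le_of_forall_pos_le_add fun ε hε => ?_
  obtain ⟨s, hs0, hslt, hys⟩ := exists_lt_of_gauge_lt habs
    (lt_add_of_pos_right (gauge Ω y) (half_pos hε))
  set v := x - y with hv
  set r : ℝ := ‖v‖ / ρ + ε / 2 with hr
  have hr0 : 0 < r := by positivity
  have ht0 : 0 < s + r := by positivity
  -- v / r ∈ ball 0 ρ
  have hvr : r⁻¹ • v ∈ Metric.ball (0 : EuclideanSpace ℝ (Fin n)) ρ := by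
    rw [mem_ball_zero_iff, norm_smul, norm_inv, Real.norm_of_nonneg hr0.le]
    rw [inv_mul_lt_iff₀ hr0]
    calc ‖v‖ = (‖v‖ / ρ) * ρ := by field_simp
    _ < r * ρ := by
        apply mul_lt_mul_of_pos_right _ hρ
        simp [hr]; linarith
  have hys' : s⁻¹ • y ∈ Ω := by
    rwa [mem_smul_set_iff_inv_smul_mem₀ hs0.ne'] at hys
  have hx : x ∈ (s + r) • Ω := by
    rw [mem_smul_set_iff_inv_smul_mem₀ ht0.ne']
    have := (hstar _ hvr) hys' (a := r / (s + r)) (b := s / (s + r))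
      (by positivity) (by positivity) (by field_simp; ring)
    have heq : (s + r)⁻¹ • x = (s / (s + r)) • (s⁻¹ • y) + (r / (s + r)) • (r⁻¹ • v) := by
      rw [smul_smul, smul_smul]
      rw [div_mul_eq_mul_div, mul_inv_cancel₀ hs0.ne', div_mul_eq_mul_div,
        mul_inv_cancel₀ hr0.ne']
      rw [← smul_add, one_div]
      congr 1
      rw [hv]
      abel
    rw [heq, add_comm]
    exact this
  have := gauge_le_of_mem ht0.le hx
  calc gauge Ω x ≤ s + r := this
  _ ≤ gauge Ω y + ‖x - y‖ / ρ + ε := by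
      simp only [hr]
      linarith

/-- Proposition 6 (`proposition:lipschitz_of_gauge_function_when_unbounded`):
the gauge function of a (possibly unbounded) star domain that is star-shaped with
respect to `ball 0 ρ` is Lipschitz with constant `1/ρ`. -/
theorem gauge_function_lipschitz
    (n : ℕ) (hn : 1 ≤ n) (Ω : Set (EuclideanSpace ℝ (Fin n)))
    (hΩ : IsOpen Ω) (ρ : ℝ) (hρ : 0 < ρ)
    (hstar : ∀ z ∈ Metric.ball (0 : EuclideanSpace ℝ (Fin n)) ρ, StarConvex ℝ z Ω) :
    ∀ x y : EuclideanSpace ℝ (Fin n),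
      |gauge Ω x - gauge Ω y| ≤ (1 / ρ) * ‖x - y‖ := by
  intro x y
  rcases Ω.eq_empty_or_nonempty with rfl | hne
  · simp [gauge_empty]
    positivity
  · have h1 := gauge_key n Ω hΩ ρ hρ hstar hne x y
    have h2 := gauge_key n Ω hΩ ρ hρ hstar hne y x
    rw [norm_sub_rev] at h2
    rw [abs_sub_le_iff]
    constructor <;> rw [one_div, inv_mul_eq_div] <;> linarith
end

section
/- Let n ≥ 1 and let Ω ⊆ EuclideanSpace ℝ (Fin n) be a nonempty open convex set with Ω ≠ E (so its frontier is nonempty). Define the oriented distance function d : E → ℝ by d(x) = -Metric.infDist x (frontier Ω) if x ∈ closure Ω, and d(x) = Metric.infDist x (frontier Ω) otherwise. Then d is convex on E (ConvexOn ℝ Set.univ d). -/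
open Metric Set RealInnerProductSpace

/-- A segment from a point of `closure s` to a point outside `closure s` meets the frontier
at a point no farther than the endpoint. -/
lemma aux_seg_frontier {E : Type*} [NormedAddCommGroup E] [NormedSpace ℝ E] (s : Set E)
    {w v : E} (hw : w ∈ closure s) (hv : v ∉ closure s) :
    ∃ q ∈ frontier s, dist w q ≤ dist w v := by
  set γ : ℝ → E := fun t => w + t • (v - w) with hγ
  have hγcont : Continuous γ := continuous_const.add (continuous_id.smul continuous_const)
  set A : Set ℝ := Icc (0:ℝ) 1 ∩ γ ⁻¹' (closure s) with hA
  have hA0 : (0:ℝ) ∈ A := by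
    constructor
    · exact ⟨le_refl _, zero_le_one⟩
    · simp [hγ, hw]
  have hAne : A.Nonempty := ⟨0, hA0⟩
  have hAbdd : BddAbove A := ⟨1, fun t ht => ht.1.2⟩
  have hAclosed : IsClosed A := isClosed_Icc.inter (isClosed_closure.preimage hγcont)
  set T := sSup A with hT
  have hTA : T ∈ A := hAclosed.csSup_mem hAne hAbdd
  have hγ1 : γ 1 = v := by simp [hγ]
  have hT1 : T < 1 := by
    rcases lt_or_eq_of_le hTA.1.2 with h | h
    · exact h
    · exfalso; apply hv; rw [← hγ1, ← h]; exact hTA.2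
  have hγT : γ T ∈ closure s := hTA.2
  have hnotint : γ T ∉ interior s := by
    intro hint
    have hop : IsOpen (γ ⁻¹' interior s) := isOpen_interior.preimage hγcont
    obtain ⟨δ, hδ, hball⟩ := Metric.isOpen_iff.1 hop T hint
    set t := min 1 (T + δ/2) with ht
    have htT : T < t := lt_min (by linarith [hT1]) (by linarith)
    have htb : t ∈ Metric.ball T δ := by
      rw [Real.ball_eq_Ioo]
      constructor
      · linarith [htT]
      · calc t ≤ T + δ/2 := min_le_right _ _
          _ < T + δ := by linarith
    have htA : t ∈ A := by
      refine ⟨⟨le_trans hTA.1.1 htT.le, min_le_left _ _⟩, ?_⟩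
      exact subset_closure (interior_subset (hball htb))
    exact absurd (le_csSup hAbdd htA) (not_le.2 htT)
  refine ⟨γ T, ⟨hγT, hnotint⟩, ?_⟩
  have : dist w (γ T) = T * dist w v := by
    rw [dist_eq_norm, dist_eq_norm, hγ]
    simp only [sub_add_eq_sub_sub, sub_self, zero_sub, norm_neg, norm_smul,
      Real.norm_eq_abs, abs_of_nonneg hTA.1.1]
    rw [show w - v = -(v - w) by abel, norm_neg]
  rw [this]
  calc T * dist w v ≤ 1 * dist w v :=
        mul_le_mul_of_nonneg_right hTA.1.2 dist_nonneg
    _ = dist w v := one_mul _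

/-- Second part of Lemma 12: the oriented distance function of a nonempty open convex
set (not the whole space) is convex. -/
theorem oriented_distance_convex
    (n : ℕ) (hn : 1 ≤ n) (Ω : Set (EuclideanSpace ℝ (Fin n)))
    (hΩ : IsOpen Ω) (hconv : Convex ℝ Ω) (hne : Ω.Nonempty) (hnu : Ω ≠ Set.univ)
    (d : EuclideanSpace ℝ (Fin n) → ℝ)
    (hd_in : ∀ x ∈ closure Ω, d x = -Metric.infDist x (frontier Ω))
    (hd_out : ∀ x : EuclideanSpace ℝ (Fin n), x ∉ closure Ω →
      d x = Metric.infDist x (frontier Ω)) :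
    ConvexOn ℝ Set.univ d := by
  have hF : (frontier Ω).Nonempty := nonempty_frontier_iff.2 ⟨hne, hnu⟩
  -- the bound on closed half-spaces extends to the closure
  have hclosbound : ∀ (u : EuclideanSpace ℝ (Fin n)) (c : ℝ), (∀ y ∈ Ω, ⟪y, u⟫ ≤ c) →
      ∀ y ∈ closure Ω, ⟪y, u⟫ ≤ c := by
    intro u c hc y hy
    have hcl : closure Ω ⊆ {y : EuclideanSpace ℝ (Fin n) | ⟪y, u⟫ ≤ c} :=
      closure_minimal hc (isClosed_le (continuous_id.inner continuous_const) continuous_const)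
    exact hcl hy
  -- Lemma A: every supporting affine function is below d
  have hA : ∀ (u : EuclideanSpace ℝ (Fin n)) (c : ℝ), ‖u‖ = 1 → (∀ y ∈ Ω, ⟪y, u⟫ ≤ c) →
      ∀ w : EuclideanSpace ℝ (Fin n), ⟪w, u⟫ - c ≤ d w := by
    intro u c hu hc w
    by_cases hw : w ∈ closure Ω
    · rw [hd_in w hw]
      set ρ := infDist w (frontier Ω) with hρ
      have hρ0 : 0 ≤ ρ := infDist_nonneg
      have h0 : ⟪w, u⟫ ≤ c := hclosbound u c hc w hw
      -- for 0 ≤ t < ρ, the point w + t • u stays in the closure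
      have key : ∀ t : ℝ, 0 ≤ t → t < ρ → w + t • u ∈ closure Ω := by
        intro t ht htρ
        by_contra hv
        obtain ⟨q, hq, hdq⟩ := aux_seg_frontier Ω hw hv
        have h1 : ρ ≤ dist w q := infDist_le_dist_of_mem hq
        have h2 : dist w (w + t • u) = t := by
          rw [dist_eq_norm]
          simp [norm_smul, abs_of_nonneg ht, hu]
        rw [h2] at hdq
        linarith
      -- hence ⟪w,u⟫ + ρ ≤ c
      have hkey2 : ∀ t : ℝ, 0 ≤ t → t < ρ → t ≤ c - ⟪w, u⟫ := by
        intro t ht htρ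
        have := hclosbound u c hc _ (key t ht htρ)
        rw [inner_add_left, real_inner_smul_left] at this
        have huu : ⟪u, u⟫ = 1 := by
          rw [real_inner_self_eq_norm_mul_norm, hu]; norm_num
        rw [huu, mul_one] at this
        linarith
      have : ρ ≤ c - ⟪w, u⟫ := by
        by_contra h
        push_neg at h
        have hcw : 0 ≤ c - ⟪w, u⟫ := by linarith
        have h1 := hkey2 ((c - ⟪w, u⟫ + ρ) / 2) (by linarith) (by linarith)
        linarith
      linarith
    · rw [hd_out w hw]
      by_contra h
      push_neg at h
      obtain ⟨q, hq, hdq⟩ := (infDist_lt_iff hF).1 h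
      have hqc : ⟪q, u⟫ ≤ c :=
        hclosbound u c hc q (frontier_subset_closure hq)
      have : ⟪w, u⟫ - c ≤ dist w q := by
        have h1 : ⟪w - q, u⟫ ≤ ‖w - q‖ * ‖u‖ := real_inner_le_norm _ _
        rw [hu, mul_one] at h1
        rw [inner_sub_left] at h1
        rw [dist_eq_norm]
        linarith
      linarith
  -- Lemma B: d is approximately attained by a supporting affine function
  have hB : ∀ z : EuclideanSpace ℝ (Fin n), ∀ ε : ℝ, 0 < ε → ∃ (u : EuclideanSpace ℝ (Fin n)) (c : ℝ), ‖u‖ = 1 ∧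
      (∀ y ∈ Ω, ⟪y, u⟫ ≤ c) ∧ d z - ε ≤ ⟪z, u⟫ - c := by
    intro z ε hε
    by_cases hz : z ∈ closure Ω
    · rw [hd_in z hz]
      set ρ := infDist z (frontier Ω) with hρ
      obtain ⟨q, hqF, hdq⟩ := (infDist_lt_iff hF).1 (show infDist z (frontier Ω) < ρ + ε by linarith)
      have hqnΩ : q ∉ Ω := by
        rw [hΩ.frontier_eq] at hqF
        exact hqF.2
      obtain ⟨f, hf⟩ := geometric_hahn_banach_open_point hconv hΩ hqnΩ
      set v := (InnerProductSpace.toDual ℝ (EuclideanSpace ℝ (Fin n))).symm f with hv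
      have hvf : ∀ x : EuclideanSpace ℝ (Fin n), ⟪v, x⟫ = f x := fun x => InnerProductSpace.toDual_symm_apply
      obtain ⟨y₀, hy₀⟩ := hne
      have hvne : v ≠ 0 := by
        intro h0
        have h1 := hvf y₀
        have h2 := hvf q
        rw [h0] at h1 h2
        simp only [inner_zero_left] at h1 h2
        have := hf y₀ hy₀
        rw [← h1, ← h2] at this
        exact lt_irrefl _ this
      have hvnorm : (0:ℝ) < ‖v‖ := norm_pos_iff.2 hvne
      refine ⟨‖v‖⁻¹ • v, ⟪q, ‖v‖⁻¹ • v⟫, ?_, ?_, ?_⟩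
      · rw [norm_smul, norm_inv, norm_norm, inv_mul_cancel₀ (ne_of_gt hvnorm)]
      · intro y hy
        have e1 : ⟪y, ‖v‖⁻¹ • v⟫ = ‖v‖⁻¹ * f y := by
          rw [real_inner_smul_right, real_inner_comm, hvf]
        have e2 : ⟪q, ‖v‖⁻¹ • v⟫ = ‖v‖⁻¹ * f q := by
          rw [real_inner_smul_right, real_inner_comm, hvf]
        rw [e1, e2]
        exact mul_le_mul_of_nonneg_left (hf y hy).le (by positivity)
      · have h1 : ⟪z, ‖v‖⁻¹ • v⟫ - ⟪q, ‖v‖⁻¹ • v⟫ = ⟪z - q, ‖v‖⁻¹ • v⟫ := by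
          rw [inner_sub_left]
        rw [h1]
        have h2 : |⟪z - q, ‖v‖⁻¹ • v⟫| ≤ ‖z - q‖ * ‖‖v‖⁻¹ • v‖ :=
          abs_real_inner_le_norm _ _
        have hnu1 : ‖‖v‖⁻¹ • v‖ = 1 := by
          rw [norm_smul, norm_inv, norm_norm, inv_mul_cancel₀ (ne_of_gt hvnorm)]
        rw [hnu1, mul_one] at h2
        have h3 : -(‖z - q‖) ≤ ⟪z - q, ‖v‖⁻¹ • v⟫ := neg_le_of_abs_le h2
        have h4 : ‖z - q‖ = dist z q := (dist_eq_norm _ _).symm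
        rw [h4] at h3
        linarith
    · rw [hd_out z hz]
      have hKne : (closure Ω).Nonempty := hne.closure
      obtain ⟨p, hpK, hp⟩ := isClosed_closure.exists_infDist_eq_dist hKne z
      have hzp : z ≠ p := fun h => hz (h ▸ hpK)
      have hzpnorm : (0:ℝ) < ‖z - p‖ := by
        rw [← dist_eq_norm]; exact dist_pos.2 hzp
      -- variational inequality
      have hiInf : ‖z - p‖ = ⨅ w : closure Ω, ‖z - w‖ := by
        rw [← dist_eq_norm, ← hp, infDist_eq_iInf]
        simp only [dist_eq_norm]
      have hvar : ∀ w ∈ closure Ω, ⟪z - p, w - p⟫ ≤ 0 :=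
        (norm_eq_iInf_iff_real_inner_le_zero hconv.closure hpK).1 hiInf
      -- p is on the frontier
      have hpF : p ∈ (frontier Ω) := by
        refine ⟨hpK, ?_⟩
        intro hpint
        have hpΩ : p ∈ Ω := interior_subset hpint
        obtain ⟨r, hr, hball⟩ := Metric.isOpen_iff.1 hΩ p hpΩ
        set t := min 1 (r / (2 * ‖z - p‖)) with htdef
        have ht0 : 0 < t := lt_min one_pos (by positivity)
        have ht1 : t ≤ 1 := min_le_left _ _
        set p' := p + t • (z - p) with hp'
        have hp'Ω : p' ∈ Ω := by
          apply hball
          rw [Metric.mem_ball, dist_eq_norm, hp']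
          simp only [add_sub_cancel_left]
          rw [norm_smul, Real.norm_eq_abs, abs_of_pos ht0]
          calc t * ‖z - p‖ ≤ r / (2 * ‖z - p‖) * ‖z - p‖ :=
                mul_le_mul_of_nonneg_right (min_le_right _ _) (norm_nonneg _)
            _ = r / 2 := by field_simp
            _ < r := by linarith
        have hdist : dist z p' = (1 - t) * ‖z - p‖ := by
          rw [dist_eq_norm, hp']
          have : z - (p + t • (z - p)) = (1 - t) • (z - p) := by
            rw [sub_smul, one_smul]; abel
          rw [this, norm_smul, Real.norm_eq_abs, abs_of_nonneg (by linarith)]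
        have h1 : infDist z (closure Ω) ≤ dist z p' :=
          infDist_le_dist_of_mem (subset_closure hp'Ω)
        rw [hp, dist_eq_norm, hdist] at h1
        nlinarith
      refine ⟨‖z - p‖⁻¹ • (z - p), ⟪p, ‖z - p‖⁻¹ • (z - p)⟫, ?_, ?_, ?_⟩
      · rw [norm_smul, norm_inv, norm_norm, inv_mul_cancel₀ (ne_of_gt hzpnorm)]
      · intro y hy
        have h1 : ⟪y, ‖z - p‖⁻¹ • (z - p)⟫ - ⟪p, ‖z - p‖⁻¹ • (z - p)⟫
            = ‖z - p‖⁻¹ * ⟪z - p, y - p⟫ := by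
          rw [← inner_sub_left, real_inner_comm, real_inner_smul_left]
        have h2 := hvar y (subset_closure hy)
        have h3 : ‖z - p‖⁻¹ * ⟪z - p, y - p⟫ ≤ 0 :=
          mul_nonpos_of_nonneg_of_nonpos (by positivity) h2
        linarith [h1 ▸ h3, sub_nonpos.1 (h1 ▸ h3)]
      · have h1 : ⟪z, ‖z - p‖⁻¹ • (z - p)⟫ - ⟪p, ‖z - p‖⁻¹ • (z - p)⟫
            = ‖z - p‖⁻¹ * ⟪z - p, z - p⟫ := by
          rw [← inner_sub_left, real_inner_comm, real_inner_smul_left, real_inner_comm]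
        have h2 : ⟪z - p, z - p⟫ = ‖z - p‖ * ‖z - p‖ := real_inner_self_eq_norm_mul_norm _
        have h3 : ‖z - p‖⁻¹ * ⟪z - p, z - p⟫ = ‖z - p‖ := by
          rw [h2]; field_simp
        have h4 : infDist z (frontier Ω) ≤ dist z p := infDist_le_dist_of_mem hpF
        rw [dist_eq_norm] at h4
        linarith [h1, h3]
  -- conclude convexity
  refine ⟨convex_univ, ?_⟩
  intro x _ y _ a b ha hb hab
  simp only [smul_eq_mul]
  refine le_of_forall_pos_le_add ?_
  intro ε hε
  obtain ⟨u, c, hu, hc, hz⟩ := hB (a • x + b • y) ε hε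
  have h1 := hA u c hu hc x
  have h2 := hA u c hu hc y
  have hinner : ⟪a • x + b • y, u⟫ = a * ⟪x, u⟫ + b * ⟪y, u⟫ := by
    rw [inner_add_left, real_inner_smul_left, real_inner_smul_left]
  have h3 : a * (⟪x, u⟫ - c) ≤ a * d x := mul_le_mul_of_nonneg_left h1 ha
  have h4 : b * (⟪y, u⟫ - c) ≤ b * d y := mul_le_mul_of_nonneg_left h2 hb
  have h5 : ⟪a • x + b • y, u⟫ - c = a * (⟪x, u⟫ - c) + b * (⟪y, u⟫ - c) := by
    rw [hinner]; linear_combination c * hab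
  linarith
end

section
/- Let n ≥ 1 and let Ω ⊆ EuclideanSpace ℝ (Fin n) be a bounded open convex set with Metric.ball 0 ρ ⊆ Ω ⊆ Metric.ball 0 R, where 0 < ρ ≤ R. Then there exists ε₀ > 0 such that for every ε with 0 < ε < ε₀ there exist a function f : E → ℝ that is smooth (ContDiff ℝ ⊤ f) and strictly convex on E (StrictConvexOn ℝ Set.univ f) and attains a negative value, such that the set Ω_ε := {x | f x < 0} is bounded, open, strictly convex (StrictConvex ℝ Ω_ε), contains Metric.ball 0 (ρ/2), and satisfies: for every x̂ ∈ E with ‖x̂‖ = 1, |1 / gauge Ω x̂ - 1 / gauge Ω_ε x̂| < ε. -/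
open Set Metric Real Pointwise

section helpers
variable {E : Type*} [NormedAddCommGroup E] [InnerProductSpace ℝ E]

lemma aux_strictConvexOn_normsq (θ : ℝ) (hθ : 0 < θ) :
    StrictConvexOn ℝ (Set.univ : Set E) (fun x => θ * ‖x‖ ^ 2) := by
  refine ⟨convex_univ, fun x _ y _ hxy a b ha hb hab => ?_⟩
  simp only [smul_eq_mul]
  have h1 : ‖a • x + b • y‖ ^ 2
      = a^2*‖x‖^2 + 2*(a*b)*(inner ℝ x y : ℝ) + b^2*‖y‖^2 := by
    rw [norm_add_sq_real, real_inner_smul_left, real_inner_smul_right,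
      norm_smul, norm_smul]
    simp [abs_of_pos ha, abs_of_pos hb]
    ring
  have h2 : ‖x - y‖ ^ 2 = ‖x‖^2 - 2*(inner ℝ x y : ℝ) + ‖y‖^2 := norm_sub_sq_real x y
  have h3 : 0 < ‖x - y‖ ^ 2 :=
    pow_pos (norm_pos_iff.mpr (sub_ne_zero.mpr hxy)) 2
  have expand : a*(θ*‖x‖^2) + b*(θ*‖y‖^2) - θ*‖a • x + b • y‖^2
      = θ*(a*b*‖x-y‖^2) := by
    rw [h1, h2]
    linear_combination (-(θ*(a*‖x‖^2 + b*‖y‖^2))) * hab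
  nlinarith [mul_pos hθ (mul_pos (mul_pos ha hb) h3)]

lemma aux_convexOn_sum {ι : Type*} (t : Finset ι) (g : ι → E → ℝ)
    (h : ∀ i ∈ t, ConvexOn ℝ (Set.univ : Set E) (g i)) :
    ConvexOn ℝ (Set.univ : Set E) (fun x => ∑ i ∈ t, g i x) := by
  classical
  induction t using Finset.cons_induction with
  | empty => simpa using convexOn_const (0:ℝ) convex_univ
  | cons i s hi ih =>
      have h1 := (h i (Finset.mem_cons_self i s)).add
        (ih fun j hj => h j (Finset.mem_cons_of_mem hj))
      simp only [Finset.sum_cons]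
      exact h1

lemma aux_convexOn_exp (g : E →L[ℝ] ℝ) (u lam : ℝ) :
    ConvexOn ℝ (Set.univ : Set E) (fun x => Real.exp (lam * (g x - u))) := by
  refine ⟨convex_univ, fun x _ y _ a b ha hb hab => ?_⟩
  simp only [smul_eq_mul]
  have key : lam * (g (a • x + b • y) - u)
      = a * (lam * (g x - u)) + b * (lam * (g y - u)) := by
    rw [map_add, map_smul, map_smul]
    simp only [smul_eq_mul]
    linear_combination (lam * u) * hab
  rw [key]
  have h := convexOn_exp.2 (mem_univ (lam*(g x - u))) (mem_univ (lam*(g y - u)))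
    ha hb hab
  simpa using h

end helpers

set_option maxHeartbeats 2000000 in
theorem aux_main {E : Type*} [NormedAddCommGroup E] [InnerProductSpace ℝ E]
    [FiniteDimensional ℝ E] (Ω : Set E)
    (hΩ : IsOpen Ω) (hconv : Convex ℝ Ω) (hbdd : Bornology.IsBounded Ω)
    (R ρ : ℝ) (hρ : 0 < ρ) (hρR : ρ ≤ R)
    (hball : Metric.ball (0 : E) ρ ⊆ Ω)
    (hΩR : Ω ⊆ Metric.ball (0 : E) R) :
    ∃ ε₀ > (0 : ℝ), ∀ ε : ℝ, 0 < ε → ε < ε₀ →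
      ∃ f : E → ℝ,
        ContDiff ℝ (⊤ : ℕ∞) f ∧
        StrictConvexOn ℝ Set.univ f ∧
        (∃ x, f x < 0) ∧
        Bornology.IsBounded {x : E | f x < 0} ∧
        IsOpen {x : E | f x < 0} ∧
        StrictConvex ℝ {x : E | f x < 0} ∧
        Metric.ball (0 : E) (ρ / 2) ⊆
          {x : E | f x < 0} ∧
        (∀ x : E, ‖x‖ = 1 →
          |1 / gauge Ω x - 1 / gauge {y : E | f y < 0} x| < ε) := by
  have hR : (0:ℝ) < R := lt_of_lt_of_le hρ hρR
  refine ⟨R, hR, fun ε hε hεR => ?_⟩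
  have h0Ω : (0:E) ∈ Ω := hball (mem_ball_self hρ)
  set δ : ℝ := ε/(6*R) with hδdef
  have hδ : 0 < δ := div_pos hε (by linarith)
  have hδ1 : δ ≤ 1 := by
    rw [hδdef, div_le_one (by linarith)]; linarith
  have h1δ : (0:ℝ) < 1 + δ := by linarith
  -- closure of Ω inside the dilate
  have himg : (AffineMap.homothety (0:E) (1+δ)) '' Ω = (1+δ) • Ω := by
    simp only [← Set.image_smul]
    apply Set.image_congr
    intro y _
    simp [AffineMap.homothety_apply, add_smul]
  have hclΩ : closure Ω ⊆ (1+δ) • Ω := by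
    have h0i : (0:E) ∈ interior Ω := by rwa [hΩ.interior_eq]
    have h := hconv.closure_subset_image_homothety_interior_of_one_lt h0i (1+δ)
      (by linarith)
    rw [hΩ.interior_eq] at h
    rwa [himg] at h
  have hclR : closure Ω ⊆ closedBall (0:E) R :=
    closure_minimal (hΩR.trans ball_subset_closedBall) Metric.isClosed_closedBall
  -- the compact exterior region
  set C : Set E := closedBall (0:E) (2*R) \ ((1+δ) • Ω) with hCdef
  have hCcompact : IsCompact C :=
    (isCompact_closedBall _ _).diff (hΩ.smul₀ (ne_of_gt h1δ))
  -- separating functionals (normalized)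
  have hsep : ∀ x : C, ∃ g : E →L[ℝ] ℝ, ∃ u : ℝ,
      (∀ y ∈ closure Ω, g y < u) ∧ u < g x ∧ ρ/2 ≤ u := by
    rintro ⟨x, hx⟩
    have hxK : x ∉ closure Ω := fun h => hx.2 (hclΩ h)
    obtain ⟨g, u, hgK, hgx⟩ := geometric_hahn_banach_closed_point
      hconv.closure isClosed_closure hxK
    have hu0 : 0 < u := by
      have := hgK 0 (subset_closure h0Ω)
      simpa using this
    have hg0 : g ≠ 0 := by
      intro h
      rw [h] at hgx
      simp at hgx
      linarith
    have hgnorm : 0 < ‖g‖ := norm_pos_iff.mpr hg0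
    -- ‖g‖ ≤ 2u/ρ
    have hgle : ‖g‖ ≤ 2*u/ρ := by
      refine g.opNorm_le_bound (by positivity) fun z => ?_
      rcases eq_or_ne z 0 with rfl | hz
      · simp
      have hznorm : 0 < ‖z‖ := norm_pos_iff.mpr hz
      set y : E := (ρ/(2*‖z‖)) • z with hydef
      have hyball : ∀ w : E, ‖w‖ < ρ → g w < u := fun w hw =>
        hgK w (subset_closure (hball (mem_ball_zero_iff.mpr hw)))
      have hynorm : ‖y‖ = ρ/2 := by
        rw [hydef, norm_smul, Real.norm_eq_abs, abs_of_pos (by positivity)]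
        field_simp
      have h1 : g y < u := hyball y (by rw [hynorm]; linarith)
      have h2 : g (-y) < u := hyball (-y) (by rw [norm_neg, hynorm]; linarith)
      rw [map_neg] at h2
      have habs : |g y| ≤ u := abs_le.mpr ⟨by linarith, h1.le⟩
      have hgy : g y = (ρ/(2*‖z‖)) * g z := by rw [hydef, map_smul, smul_eq_mul]
      rw [hgy] at habs
      rw [abs_mul, abs_of_pos (by positivity : (0:ℝ) < ρ/(2*‖z‖))] at habs
      rw [Real.norm_eq_abs]
      rw [div_mul_eq_mul_div, le_div_iff₀ hρ]
      calc |g z| * ρ = (ρ/(2*‖z‖)) * |g z| * (2*‖z‖) := by field_simp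
        _ ≤ u * (2*‖z‖) := by
            apply mul_le_mul_of_nonneg_right habs (by positivity)
        _ = 2 * u * ‖z‖ := by ring
    refine ⟨‖g‖⁻¹ • g, ‖g‖⁻¹ * u, fun y hy => ?_, ?_, ?_⟩
    · simp only [ContinuousLinearMap.coe_smul', Pi.smul_apply, smul_eq_mul]
      exact mul_lt_mul_of_pos_left (hgK y hy) (by positivity)
    · simp only [ContinuousLinearMap.coe_smul', Pi.smul_apply, smul_eq_mul]
      exact mul_lt_mul_of_pos_left hgx (by positivity)
    · have h2u : ‖g‖ * ρ ≤ 2*u := by rwa [le_div_iff₀ hρ] at hgle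
      rw [inv_mul_eq_div, le_div_iff₀ hgnorm]
      nlinarith
  choose g u hgK hgx hu using hsep
  -- finite subcover
  have hUopen : ∀ i : C, IsOpen {y : E | u i < g i y} := fun i =>
    isOpen_lt continuous_const (g i).continuous
  have hcov : C ⊆ ⋃ i : C, {y : E | u i < g i y} := fun x hx =>
    Set.mem_iUnion.mpr ⟨⟨x, hx⟩, hgx ⟨x, hx⟩⟩
  obtain ⟨t, ht⟩ := hCcompact.elim_finite_subcover _ hUopen hcov
  -- constants
  set m : ℕ := t.card with hmdef
  set c : ℝ := (4/3) * (m + 1) with hcdef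
  have hc0 : (0:ℝ) < c := by positivity
  have hc1 : (1:ℝ) ≤ c := by
    rw [hcdef]
    have : (0:ℝ) ≤ (m:ℝ) := Nat.cast_nonneg m
    nlinarith
  have hlogc : 0 ≤ Real.log c := Real.log_nonneg hc1
  set θ : ℝ := c / (4*R^2) with hθdef
  have hθ : 0 < θ := by
    rw [hθdef]
    exact div_pos hc0 (by positivity)
  set lam : ℝ := max 1 (2 * Real.log c / (ρ * δ)) with hlamdef
  have hlam : 0 < lam := lt_of_lt_of_le one_pos (le_max_left _ _)
  have hlamlog : Real.log c / lam ≤ ρ * δ / 2 := by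
    rw [div_le_iff₀ hlam]
    have h2 : 2 * Real.log c / (ρ * δ) ≤ lam := le_max_right _ _
    rw [div_le_iff₀ (by positivity)] at h2
    nlinarith
  -- the function
  set f : E → ℝ := fun x =>
    (∑ i ∈ t, Real.exp (lam * (g i x - u i))) + θ * ‖x‖^2 - c with hfdef
  -- smoothness
  have hsmooth : ContDiff ℝ (⊤ : ℕ∞) f := by
    apply ContDiff.sub ?_ contDiff_const
    apply ContDiff.add
    · apply ContDiff.sum
      intro i _
      exact Real.contDiff_exp.comp
        (contDiff_const.mul ((g i).contDiff.sub contDiff_const))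
    · exact contDiff_const.mul (contDiff_norm_sq ℝ)
  -- strict convexity
  have hstrict : StrictConvexOn ℝ (Set.univ : Set E) f := by
    have h1 : ConvexOn ℝ (Set.univ : Set E)
        (fun x => ∑ i ∈ t, Real.exp (lam * (g i x - u i))) :=
      aux_convexOn_sum t _ (fun i _ => aux_convexOn_exp (g i) (u i) lam)
    have h2 := h1.add_strictConvexOn (aux_strictConvexOn_normsq θ hθ)
    have h3 := h2.add_convexOn (convexOn_const (-c) convex_univ)
    have hfeq : f = (((fun x => ∑ i ∈ t, Real.exp (lam * (g i x - u i)))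
        + fun x => θ * ‖x‖^2) + fun _ => -c) := by
      funext x
      simp only [hfdef, Pi.add_apply]
      ring
    rw [hfeq]
    exact h3
  -- f is negative on the closure of Ω
  have hfneg : ∀ y ∈ closure Ω, f y < 0 := by
    intro y hy
    have hsum : (∑ i ∈ t, Real.exp (lam * (g i y - u i))) ≤ m := by
      have : ∀ i ∈ t, Real.exp (lam * (g i y - u i)) ≤ 1 := by
        intro i _
        apply le_of_lt
        rw [Real.exp_lt_one_iff]
        have := hgK i y hy
        nlinarith
      calc (∑ i ∈ t, Real.exp (lam * (g i y - u i))) ≤ ∑ i ∈ t, (1:ℝ) :=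
            Finset.sum_le_sum this
        _ = m := by simp [hmdef]
    have hnorm : ‖y‖ ≤ R := by
      have := hclR hy
      rwa [mem_closedBall, dist_zero_right] at this
    have hθR : θ * ‖y‖^2 ≤ c/4 := by
      have hy2 : ‖y‖^2 ≤ R^2 := by nlinarith [norm_nonneg y]
      rw [hθdef]
      rw [div_mul_eq_mul_div, div_le_div_iff₀ (by positivity) (by norm_num)]
      nlinarith [mul_le_mul_of_nonneg_left hy2 hc0.le]
    have : f y ≤ m + c/4 - c := by
      simp only [hfdef]
      linarith
    have hmc : (m:ℝ) + c/4 - c = -1 := by rw [hcdef]; ring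
    linarith [hmc ▸ this]
  have hΩsub : Ω ⊆ {x : E | f x < 0} := fun y hy => hfneg y (subset_closure hy)
  -- outer containment
  have houter : {x : E | f x < 0} ⊆ ((1+δ)*(1+δ)) • Ω := by
    intro x hfx
    simp only [Set.mem_setOf_eq] at hfx
    have hsumpos : (0:ℝ) ≤ ∑ i ∈ t, Real.exp (lam * (g i x - u i)) :=
      Finset.sum_nonneg fun i _ => (Real.exp_pos _).le
    have hx2R : ‖x‖ < 2*R := by
      have h1 : θ * ‖x‖^2 < c := by simp only [hfdef] at hfx; linarith
      rw [hθdef, div_mul_eq_mul_div, div_lt_iff₀ (by positivity)] at h1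
      have h2 : ‖x‖^2 < 4*R^2 := lt_of_mul_lt_mul_left h1 hc0.le
      nlinarith [norm_nonneg x]
    have hterm : ∀ i ∈ t, g i x < u i * (1+δ) := by
      intro i hi
      have h1 : Real.exp (lam * (g i x - u i)) < c := by
        have h2 : Real.exp (lam * (g i x - u i))
            ≤ ∑ j ∈ t, Real.exp (lam * (g j x - u j)) :=
          Finset.single_le_sum (f := fun j => Real.exp (lam * (g j x - u j)))
            (fun j _ => (Real.exp_pos _).le) hi
        have h3 : (∑ j ∈ t, Real.exp (lam * (g j x - u j))) < c := by
          simp only [hfdef] at hfx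
          nlinarith [sq_nonneg ‖x‖, mul_nonneg hθ.le (sq_nonneg ‖x‖)]
        linarith
      have h4 : lam * (g i x - u i) < Real.log c := by
        rw [← Real.exp_lt_exp, Real.exp_log hc0]
        exact h1
      have h5 : g i x - u i < Real.log c / lam := by
        rw [lt_div_iff₀ hlam]; linarith [mul_comm lam (g i x - u i) ▸ h4]
      have h6 : g i x - u i ≤ ρ * δ / 2 := le_of_lt (lt_of_lt_of_le h5 hlamlog)
      have h7 : ρ/2 ≤ u i := hu i
      nlinarith
    -- x/(1+δ) lies in (1+δ)•Ω
    have hy : (1+δ)⁻¹ • x ∈ (1+δ) • Ω := by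
      by_contra hyn
      have hyC : (1+δ)⁻¹ • x ∈ C := by
        refine ⟨?_, hyn⟩
        rw [mem_closedBall, dist_zero_right, norm_smul, Real.norm_eq_abs,
          abs_of_pos (by positivity)]
        have hinv : (1+δ)⁻¹ ≤ 1 := by
          rw [inv_le_one_iff₀]; right; linarith
        nlinarith [norm_nonneg x]
      obtain ⟨i, hit⟩ := Set.mem_iUnion₂.mp (ht hyC)
      obtain ⟨hi, hlt⟩ := hit
      simp only [Set.mem_setOf_eq, map_smul, smul_eq_mul] at hlt
      have := hterm i hi
      have hui : 0 < u i := lt_of_lt_of_le (by positivity) (hu i)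
      rw [inv_mul_eq_div, lt_div_iff₀ h1δ] at hlt
      nlinarith
    rw [Set.mem_smul_set_iff_inv_smul_mem₀ (by positivity : ((1+δ)*(1+δ) : ℝ) ≠ 0)]
    rw [mul_inv, mul_smul]
    rwa [Set.mem_smul_set_iff_inv_smul_mem₀ (ne_of_gt h1δ)] at hy
  -- ball bound for the sublevel set
  have hsubball : {x : E | f x < 0} ⊆ ball (0:E) (2*R) := by
    intro x hfx
    simp only [Set.mem_setOf_eq] at hfx
    rw [mem_ball_zero_iff]
    have hsumpos : (0:ℝ) ≤ ∑ i ∈ t, Real.exp (lam * (g i x - u i)) :=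
      Finset.sum_nonneg fun i _ => (Real.exp_pos _).le
    have h1 : θ * ‖x‖^2 < c := by simp only [hfdef] at hfx; linarith
    rw [hθdef, div_mul_eq_mul_div, div_lt_iff₀ (by positivity)] at h1
    have h2 : ‖x‖^2 < 4*R^2 := lt_of_mul_lt_mul_left h1 hc0.le
    nlinarith [norm_nonneg x]
  have hSopen : IsOpen {x : E | f x < 0} :=
    isOpen_lt hsmooth.continuous continuous_const
  have hSconv : Convex ℝ {x : E | f x < 0} := by
    have := hstrict.convexOn.convex_lt 0
    simpa using this
  refine ⟨f, hsmooth, hstrict, ⟨0, hfneg 0 (subset_closure h0Ω)⟩,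
    isBounded_ball.subset hsubball, hSopen,
    hSconv.strictConvex_of_isOpen hSopen,
    (ball_subset_ball (by linarith)).trans (hball.trans hΩsub), ?_⟩
  -- the gauge estimate
  intro x hx
  have habsΩ : Absorbent ℝ Ω := absorbent_nhds_zero (hΩ.mem_nhds h0Ω)
  have habsS : Absorbent ℝ {y : E | f y < 0} :=
    absorbent_nhds_zero (hSopen.mem_nhds (hΩsub h0Ω))
  set a := gauge Ω x with hadef
  set b := gauge {y : E | f y < 0} x with hbdef
  have hba : b ≤ a := gauge_mono habsΩ hΩsub x
  have hscale : gauge (((1+δ)*(1+δ)) • Ω) x = ((1+δ)*(1+δ))⁻¹ * a := by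
    rw [gauge_smul_left_of_nonneg (by positivity : (0:ℝ) ≤ (1+δ)*(1+δ))]
    simp [smul_eq_mul]
    exact Or.inl hadef.symm
  have hab2 : ((1+δ)*(1+δ))⁻¹ * a ≤ b := by
    have := gauge_mono habsS houter x
    rwa [hscale] at this
  have haR : 1/R ≤ a := by
    have := gauge_mono habsΩ hΩR x
    rwa [gauge_ball hR.le, hx] at this
  have hbR : 1/(2*R) ≤ b := by
    have := gauge_mono habsS hsubball x
    rwa [gauge_ball (by positivity : (0:ℝ) ≤ 2*R), hx] at this
  have ha0 : 0 < a := lt_of_lt_of_le (by positivity) haR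
  have hb0 : 0 < b := lt_of_lt_of_le (by positivity) hbR
  have h1 : 1/a ≤ 1/b := one_div_le_one_div_of_le hb0 hba
  rw [abs_of_nonpos (by linarith)]
  have h1a : 1/a ≤ R := by
    rw [div_le_iff₀ ha0]
    rw [div_le_iff₀ hR] at haR
    linarith [mul_comm a R]
  have key' : a/((1+δ)*(1+δ)) ≤ b := by rwa [inv_mul_eq_div] at hab2
  have h2 : 1/b ≤ ((1+δ)*(1+δ))/a := by
    have h := one_div_le_one_div_of_le (by positivity : (0:ℝ) < a/((1+δ)*(1+δ))) key'
    rwa [one_div_div] at h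
  have h3 : ((1+δ)*(1+δ))/a - 1/a ≤ 3*δ*(1/a) := by
    have hd : (1+δ)*(1+δ) - 1 ≤ 3*δ := by nlinarith
    have heq : ((1+δ)*(1+δ))/a - 1/a = ((1+δ)*(1+δ) - 1) * (1/a) := by
      field_simp
    rw [heq]
    exact mul_le_mul_of_nonneg_right hd (by positivity)
  have h4 : 3*δ*(1/a) ≤ 3*δ*R := by
    apply mul_le_mul_of_nonneg_left h1a (by positivity)
  have h5 : 3*δ*R = ε/2 := by
    rw [hδdef]
    field_simp
    ring
  linarith

/-- Proposition 13 (`proposition:smudgeapproximation`): a bounded convex domain with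
`ball 0 ρ ⊆ Ω ⊆ ball 0 R` can be approximated by bounded strictly convex domains with
smooth boundary (encoded as strict sublevel sets of smooth strictly convex functions),
with the reciprocal radial functions converging uniformly on the unit sphere. -/
theorem smooth_strictly_convex_approximation
    (n : ℕ) (hn : 1 ≤ n) (Ω : Set (EuclideanSpace ℝ (Fin n)))
    (hΩ : IsOpen Ω) (hconv : Convex ℝ Ω) (hbdd : Bornology.IsBounded Ω)
    (R ρ : ℝ) (hρ : 0 < ρ) (hρR : ρ ≤ R)
    (hball : Metric.ball (0 : EuclideanSpace ℝ (Fin n)) ρ ⊆ Ω)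
    (hΩR : Ω ⊆ Metric.ball (0 : EuclideanSpace ℝ (Fin n)) R) :
    ∃ ε₀ > (0 : ℝ), ∀ ε : ℝ, 0 < ε → ε < ε₀ →
      ∃ f : EuclideanSpace ℝ (Fin n) → ℝ,
        ContDiff ℝ (⊤ : ℕ∞) f ∧
        StrictConvexOn ℝ Set.univ f ∧
        (∃ x, f x < 0) ∧
        Bornology.IsBounded {x : EuclideanSpace ℝ (Fin n) | f x < 0} ∧
        IsOpen {x : EuclideanSpace ℝ (Fin n) | f x < 0} ∧
        StrictConvex ℝ {x : EuclideanSpace ℝ (Fin n) | f x < 0} ∧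
        Metric.ball (0 : EuclideanSpace ℝ (Fin n)) (ρ / 2) ⊆
          {x : EuclideanSpace ℝ (Fin n) | f x < 0} ∧
        (∀ x : EuclideanSpace ℝ (Fin n), ‖x‖ = 1 →
          |1 / gauge Ω x - 1 / gauge {y : EuclideanSpace ℝ (Fin n) | f y < 0} x| < ε) :=
  aux_main Ω hΩ hconv hbdd R ρ hρ hρR hball hΩR
end
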